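/- Let n > 0, ν ∈ (0,1), T ≥ 0, f > 0 be real numbers, let σ_h > 0 and σ_n ≥ 0 be real numbers with σ_n² ≤ f·σ_h², and let μ_h, μ_n be real numbers. Define ρ = T·√(1/(ν·n) + f/((1−ν)·n)). If μ_h − μ_n > ρ·σ_h, then the Welch t-statistic satisfies (μ_h − μ_n)/√(σ_h²/(ν·n) + σ_n²/((1−ν)·n)) > T. -/
import Mathlib


/-- Deterministic core of Part 2 (false negative bound for mean drift) of the
OPTWIN theorem: if the mean difference exceeds `ρ·σ_h` with
`ρ = T·√(1/(ν·n) + f/((1−ν)·n))`, then the Welch t-statistic exceeds `T`. -/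
theorem optwin_mean_drift_t_value_gt
    (n ν T f σh σn μh μn : ℝ)
    (hn : 0 < n) (hν : ν ∈ Set.Ioo (0 : ℝ) 1)
    (hT : 0 ≤ T) (hf : 0 < f)
    (hσh : 0 < σh) (hσn : 0 ≤ σn)
    (hfbound : σn ^ 2 ≤ f * σh ^ 2)
    (hdrift : μh - μn > (T * Real.sqrt (1 / (ν * n) + f / ((1 - ν) * n))) * σh) :
    (μh - μn) / Real.sqrt (σh ^ 2 / (ν * n) + σn ^ 2 / ((1 - ν) * n)) > T := by
  obtain ⟨hν0, hν1⟩ := hν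
  have hνn : 0 < ν * n := by positivity
  have h1ν : 0 < 1 - ν := by linarith
  have h1νn : 0 < (1 - ν) * n := by positivity
  set D2 : ℝ := σh ^ 2 / (ν * n) + σn ^ 2 / ((1 - ν) * n) with hD2
  have hD2pos : 0 < D2 := by positivity
  have hDpos : 0 < Real.sqrt D2 := Real.sqrt_pos.mpr hD2pos
  -- compare D2 with σh^2 * (1/(νn) + f/((1-ν)n))
  have hle : D2 ≤ σh ^ 2 * (1 / (ν * n) + f / ((1 - ν) * n)) := by
    have h2 : σn ^ 2 / ((1 - ν) * n) ≤ f * σh ^ 2 / ((1 - ν) * n) := by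
      gcongr
    rw [hD2]
    have h3 : σh ^ 2 * (1 / (ν * n) + f / ((1 - ν) * n))
        = σh ^ 2 / (ν * n) + f * σh ^ 2 / ((1 - ν) * n) := by ring
    rw [h3]
    linarith
  have hsum : (0:ℝ) ≤ 1 / (ν * n) + f / ((1 - ν) * n) := by positivity
  have hsqrtle : Real.sqrt D2 ≤ Real.sqrt (1 / (ν * n) + f / ((1 - ν) * n)) * σh := by
    have := Real.sqrt_le_sqrt hle
    rwa [Real.sqrt_mul (sq_nonneg σh), Real.sqrt_sq hσh.le, mul_comm] at this
  have hkey : T * Real.sqrt D2 ≤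
      (T * Real.sqrt (1 / (ν * n) + f / ((1 - ν) * n))) * σh := by
    calc T * Real.sqrt D2 ≤ T * (Real.sqrt (1 / (ν * n) + f / ((1 - ν) * n)) * σh) :=
          mul_le_mul_of_nonneg_left hsqrtle hT
      _ = _ := by ring
  have : T * Real.sqrt D2 < μh - μn := lt_of_le_of_lt hkey hdrift
  exact (lt_div_iff₀ hDpos).mpr (by linarith)
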